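/- For μ > 0 and x > 0, the series e^{-x} Σ_{n=0}^∞ (x^n/n!) Q_{μ+n}(y) with Q_a(y) = Γ(a,y)/Γ(a) converges and equals the generalized Marcum Q-function Q_μ(x,y); moreover each partial sum is bounded above by 1. -/

import Mathlib

open Real MeasureTheory

/-- Modified Bessel function of the first kind `I_ν(z)` via its Maclaurin series. -/
noncomputable def besselI (ν z : ℝ) : ℝ :=
  (z / 2) ^ ν * ∑' n : ℕ, (z ^ 2 / 4) ^ n / (n.factorial * Real.Gamma (ν + n + 1))

/-- Upper incomplete gamma function `Γ(a, y)`. -/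
noncomputable def uGamma (a y : ℝ) : ℝ := ∫ t in Set.Ioi y, t ^ (a - 1) * Real.exp (-t)

/-- Regularized upper incomplete gamma function `Q_a(y) = Γ(a,y)/Γ(a)`. -/
noncomputable def regQ (a y : ℝ) : ℝ := uGamma a y / Real.Gamma a

/-- η-th moment of the partial non-central chi-squared distribution (Nuttall Q-function). -/
noncomputable def nuttallQ (η μ x y : ℝ) : ℝ :=
  x ^ ((1 - μ) / 2) *
    ∫ t in Set.Ioi y, t ^ (η + (μ - 1) / 2) * Real.exp (-t - x) *
      besselI (μ - 1) (2 * Real.sqrt (x * t))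

/-- Generalized Marcum Q-function. -/
noncomputable def marcumQ (μ x y : ℝ) : ℝ := nuttallQ 0 μ x y

/-- Complementary Marcum function `P_μ(x,y)`. -/
noncomputable def marcumP (μ x y : ℝ) : ℝ :=
  x ^ ((1 - μ) / 2) *
    ∫ t in Set.Ioc 0 y, t ^ ((μ - 1) / 2) * Real.exp (-t - x) *
      besselI (μ - 1) (2 * Real.sqrt (x * t))

/-! Expanding the Bessel series, the integrand of `Q_μ(x, y)` becomes `∑ₙ e^{-x} xⁿ/n! · gₙ(t)`
with `gₙ(t) = t^{μ+n-1} e^{-t} / Γ(μ+n)` the Gamma(μ+n) density, whose integral over `(y, ∞)` is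
`Q_{μ+n}(y) ∈ [0, 1]`. All terms are nonnegative and their integrals are dominated by the summable
Poisson weights `e^{-x} xⁿ/n!`, so sum and integral commute; the same domination bounds the
partial sums by `e^{-x} eˣ = 1`. -/

open Set

section IncompleteGamma

variable {a y : ℝ}

lemma integrableOn_rpow_mul_exp_neg_Ioi (ha : 0 < a) (hy : 0 ≤ y) :
    IntegrableOn (fun t : ℝ => t ^ (a - 1) * exp (-t)) (Ioi y) := by
  have h₀ : IntegrableOn (fun t : ℝ => t ^ (a - 1) * exp (-t)) (Ioi 0) := by
    simpa only [mul_comm] using Real.GammaIntegral_convergent ha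
  exact h₀.mono_set (Ioi_subset_Ioi hy)

lemma uGamma_nonneg (hy : 0 ≤ y) : 0 ≤ uGamma a y :=
  setIntegral_nonneg measurableSet_Ioi fun t (ht : y < t) => by
    have ht₀ : 0 ≤ t := hy.trans ht.le
    positivity

lemma uGamma_zero (ha : 0 < a) : uGamma a 0 = Gamma a := by
  rw [Real.Gamma_eq_integral ha, uGamma]
  simp only [mul_comm]

lemma uGamma_le_Gamma (ha : 0 < a) (hy : 0 ≤ y) : uGamma a y ≤ Gamma a := by
  rw [← uGamma_zero ha]
  refine setIntegral_mono_set (integrableOn_rpow_mul_exp_neg_Ioi ha le_rfl) ?_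
    (Filter.Eventually.of_forall (Ioi_subset_Ioi hy))
  filter_upwards [ae_restrict_mem measurableSet_Ioi] with t (ht : 0 < t)
  positivity

lemma regQ_nonneg (ha : 0 ≤ a) (hy : 0 ≤ y) : 0 ≤ regQ a y :=
  div_nonneg (uGamma_nonneg hy) (Real.Gamma_nonneg_of_nonneg ha)

lemma regQ_le_one (ha : 0 < a) (hy : 0 ≤ y) : regQ a y ≤ 1 :=
  div_le_one_of_le₀ (uGamma_le_Gamma ha hy) (Real.Gamma_nonneg_of_nonneg ha.le)

lemma setIntegral_rpow_mul_exp_neg_div_Gamma (a y : ℝ) :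
    ∫ t in Ioi y, t ^ (a - 1) * exp (-t) / Gamma a = regQ a y :=
  integral_div _ _

end IncompleteGamma

lemma besselI_two_mul_sqrt (ν : ℝ) {z : ℝ} (hz : 0 ≤ z) :
    besselI ν (2 * √z) = √z ^ ν * ∑' n : ℕ, z ^ n / (n.factorial * Gamma (ν + n + 1)) := by
  rw [besselI, mul_div_cancel_left₀ _ two_ne_zero, mul_pow, sq_sqrt hz]
  norm_num

lemma marcumQ_integrand_eq_tsum (μ : ℝ) {x t : ℝ} (hx : 0 < x) (ht : 0 < t) :
    x ^ ((1 - μ) / 2) *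
        (t ^ ((μ - 1) / 2) * exp (-t - x) * besselI (μ - 1) (2 * √(x * t))) =
      ∑' n : ℕ, exp (-x) * (x ^ n / n.factorial) * (t ^ (μ + n - 1) * exp (-t) / Gamma (μ + n)) := by
  have hsqrt : √(x * t) ^ (μ - 1) = x ^ ((μ - 1) / 2) * t ^ ((μ - 1) / 2) := by
    rw [sqrt_eq_rpow, ← rpow_mul (mul_pos hx ht).le, mul_rpow hx.le ht.le, one_div_mul_eq_div]
  have hx_cancel : x ^ ((1 - μ) / 2) * x ^ ((μ - 1) / 2) = 1 := by
    rw [← rpow_add hx, ← add_div, sub_add_sub_cancel', sub_self, zero_div, rpow_zero]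
  have ht_pow (n : ℕ) : t ^ ((μ - 1) / 2) * t ^ ((μ - 1) / 2) * t ^ n = t ^ (μ + n - 1) := by
    rw [← rpow_add ht, ← rpow_natCast, ← rpow_add ht]
    ring_nf
  rw [besselI_two_mul_sqrt _ (mul_pos hx ht).le, hsqrt, ← mul_assoc, ← mul_assoc,
    ← tsum_mul_left]
  refine tsum_congr fun n => ?_
  rw [show μ - 1 + n + 1 = μ + n by ring, mul_pow, ← ht_pow n,
    show -t - x = -t + -x by ring, exp_add]
  linear_combination (exp (-x) * exp (-t) * t ^ ((μ - 1) / 2) * t ^ ((μ - 1) / 2) *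
    (x ^ n / n.factorial) * t ^ n / Gamma (μ + n)) * hx_cancel

lemma marcumQ_eq_setIntegral_tsum (μ : ℝ) {x y : ℝ} (hx : 0 < x) (hy : 0 ≤ y) :
    marcumQ μ x y = ∫ t in Ioi y,
      ∑' n : ℕ, exp (-x) * (x ^ n / n.factorial) * (t ^ (μ + n - 1) * exp (-t) / Gamma (μ + n)) := by
  rw [marcumQ, nuttallQ, ← integral_const_mul]
  refine setIntegral_congr_fun measurableSet_Ioi fun t (ht : y < t) => ?_
  rw [zero_add, marcumQ_integrand_eq_tsum μ hx (hy.trans_lt ht)]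

lemma hasSum_integral_of_nonneg_of_summable {α ι : Type*} [MeasurableSpace α] [Countable ι]
    {ν : Measure α} {F : ι → α → ℝ} (hF_nonneg : ∀ i, 0 ≤ᵐ[ν] F i)
    (hF_int : ∀ i, Integrable (F i) ν) (hF_sum : Summable fun i => ∫ a, F i a ∂ν) :
    HasSum (fun i => ∫ a, F i a ∂ν) (∫ a, ∑' i, F i a ∂ν) := by
  refine hasSum_integral_of_summable_integral_norm hF_int (hF_sum.congr fun i => ?_)
  refine integral_congr_ae ?_
  filter_upwards [hF_nonneg i] with a ha
  exact (norm_of_nonneg ha).symm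

lemma sum_range_exp_neg_mul_pow_div_factorial_le_one {x : ℝ} (hx : 0 ≤ x) (N : ℕ) :
    ∑ n ∈ Finset.range N, exp (-x) * (x ^ n / n.factorial) ≤ 1 := by
  calc ∑ n ∈ Finset.range N, exp (-x) * (x ^ n / n.factorial)
      = exp (-x) * ∑ n ∈ Finset.range N, x ^ n / n.factorial := (Finset.mul_sum ..).symm
    _ ≤ exp (-x) * exp x := mul_le_mul_of_nonneg_left (sum_le_exp_of_nonneg hx N) (exp_nonneg _)
    _ = 1 := by rw [← exp_add, neg_add_cancel, exp_zero]

theorem marcumQ_series_regQ (μ x y : ℝ) (hμ : 0 < μ) (hx : 0 < x) (hy : 0 ≤ y) :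
    HasSum (fun n : ℕ => Real.exp (-x) * (x ^ n / n.factorial) * regQ (μ + n) y)
        (marcumQ μ x y) ∧
      ∀ N : ℕ,
        ∑ n ∈ Finset.range N, Real.exp (-x) * (x ^ n / n.factorial) * regQ (μ + n) y ≤ 1 := by
  have hμn (n : ℕ) : 0 < μ + n := by positivity
  have hweight (n : ℕ) : 0 ≤ exp (-x) * (x ^ n / n.factorial) := by positivity
  have hterm_le (n : ℕ) : exp (-x) * (x ^ n / n.factorial) * regQ (μ + n) y ≤
      exp (-x) * (x ^ n / n.factorial) :=
    mul_le_of_le_one_right (hweight n) (regQ_le_one (hμn n) hy)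
  refine ⟨?_, fun N => (Finset.sum_le_sum fun n _ => hterm_le n).trans
    (sum_range_exp_neg_mul_pow_div_factorial_le_one hx.le N)⟩
  have hsum : Summable fun n : ℕ => exp (-x) * (x ^ n / n.factorial) * regQ (μ + n) y :=
    ((summable_pow_div_factorial x).mul_left _).of_nonneg_of_le
      (fun n => mul_nonneg (hweight n) (regQ_nonneg (hμn n).le hy)) hterm_le
  have hintegral (n : ℕ) : ∫ t in Ioi y,
      exp (-x) * (x ^ n / n.factorial) * (t ^ (μ + n - 1) * exp (-t) / Gamma (μ + n)) =
      exp (-x) * (x ^ n / n.factorial) * regQ (μ + n) y := by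
    rw [integral_const_mul, setIntegral_rpow_mul_exp_neg_div_Gamma]
  rw [marcumQ_eq_setIntegral_tsum μ hx hy]
  simp only [← hintegral] at hsum ⊢
  refine hasSum_integral_of_nonneg_of_summable (fun n => ?_) (fun n => ?_) hsum
  · filter_upwards [ae_restrict_mem measurableSet_Ioi] with t (ht : y < t)
    have ht₀ : 0 < t := hy.trans_lt ht
    have hΓ : 0 < Gamma (μ + n) := Real.Gamma_pos_of_pos (hμn n)
    positivity
  · exact ((integrableOn_rpow_mul_exp_neg_Ioi (hμn n) hy).div_const _).const_mul _
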